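/- arXiv:2512.09881 — 3 statements merged into one kernel-verified Lean document; each statement's English description precedes it below -/
import Mathlib

section
/- The map ι : T → Sz(T), ι(x) = ({x⁺, x}, x), from an li-constellation T into its Szendrei expansion Sz(T) is an inductive preradiant; moreover, whenever the corestriction x|y⁺ exists, ι(x) ⊗ ι(y) = ι(x)⁺ ⊗ ι(x ⊗ y), where ⊗ denotes the pseudo-product. -/
/-- A "pre-constellation": carrier with definedness predicate `D`, partial
multiplication `mul`, unary `plus`, a partial order `le`, a restriction
operation `res` (so `res e x` is `e|x`), a corestriction-existence predicate
`coE` and corestriction operation `cor` (so `cor x e` is `x|e`). -/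
structure PreConst (T : Type*) where
  D : T → T → Prop
  mul : T → T → T
  plus : T → T
  le : T → T → Prop
  res : T → T → T
  coE : T → T → Prop
  cor : T → T → T

/-- `e ∈ T⁺`. -/
def PreConst.isPlus {T : Type*} (P : PreConst T) (e : T) : Prop := ∃ x, e = P.plus x

/-- Two elements are in the same connected component of the poset `(T⁺, ≤)`. -/
def PreConst.connected {T : Type*} (P : PreConst T) : T → T → Prop :=
  Relation.ReflTransGen (fun a b => P.isPlus a ∧ P.isPlus b ∧ (P.le a b ∨ P.le b a))

/-- The pseudo-product `x ⊗ y = (x|y⁺)y`. -/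
def PreConst.pprod {T : Type*} (P : PreConst T) (x y : T) : T :=
  P.mul (P.cor x (P.plus y)) y

/-- `P` is a left constellation (axioms (c1)-(c4)). -/
structure IsConst {T : Type*} (P : PreConst T) : Prop where
  c1 : ∀ x y z, (P.D x y ∧ P.D y z) ↔ (P.D y z ∧ P.D x (P.mul y z))
  c2 : ∀ x y z, P.D x y → P.D y z →
    P.D (P.mul x y) z ∧ P.mul x (P.mul y z) = P.mul (P.mul x y) z
  c3 : ∀ e x, P.isPlus e → ((P.D e x ∧ P.mul e x = x) ↔ e = P.plus x)
  c4 : ∀ e x, P.isPlus e → P.D x e → P.mul x e = x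

/-- `P` is a locally inductive left constellation (li-constellation):
a left constellation with a partial order satisfying (wo1)-(wo9). -/
structure IsLiC {T : Type*} (P : PreConst T) extends IsConst P : Prop where
  le_refl : ∀ x, P.le x x
  le_trans : ∀ x y z, P.le x y → P.le y z → P.le x z
  le_antisymm : ∀ x y, P.le x y → P.le y x → x = y
  wo1 : ∀ x y x' y', P.le x y → P.le x' y' → P.D x x' → P.D y y' →
    P.le (P.mul x x') (P.mul y y')
  wo2 : ∀ x y, P.le x y → P.le (P.plus x) (P.plus y)
  wo3 : ∀ e x, P.isPlus e → P.le e (P.plus x) →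
    P.le (P.res e x) x ∧ P.plus (P.res e x) = e ∧
      ∀ r, P.le r x → P.plus r = e → r = P.res e x
  wo4 : ∀ x e, P.isPlus e →
    (P.coE x e ↔ ∃ y, P.le y x ∧ P.D y e) ∧
    (P.coE x e → P.le (P.cor x e) x ∧ P.D (P.cor x e) e ∧
      ∀ y, P.le y x → P.D y e → P.le y (P.cor x e))
  wo5 : ∀ x y e, P.isPlus e → P.D x y → (P.coE (P.mul x y) e ↔ P.coE y e)
  wo6 : ∀ x e f, P.isPlus e → P.isPlus f → P.le f e → (P.coE x e ↔ P.coE x f)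
  wo7 : ∀ x y e, P.isPlus e → P.D x y → P.coE (P.mul x y) e →
    P.plus (P.cor (P.mul x y) e) = P.plus (P.cor x (P.plus (P.cor y e)))
  wo8 : ∀ e f, P.isPlus e → P.isPlus f → P.le e f →
    P.coE e f ∧ P.cor e f = P.res e f
  wo9a : ∀ e f, P.isPlus e → P.isPlus f → P.connected e f → P.coE e f
  wo9b : ∀ e f, P.isPlus e → P.isPlus f → P.coE e f →
    P.isPlus (P.cor e f) ∧ P.le (P.cor e f) e ∧ P.le (P.cor e f) f ∧
      ∀ g, P.isPlus g → P.le g e → P.le g f → P.le g (P.cor e f)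

/-- The Szendrei expansion of an li-constellation, realized on `Finset T × T`:
an element `(A, a)` (meaningful when `a ∈ A`, `a⁺ ∈ A` and `b⁺ = a⁺`
for all `b ∈ A`) with operation `(A,a)(B,b) = (A, ab)` when `ab` is defined,
`(A,a)⁺ = (A, a⁺)`, order `(A,a) ≤ (B,b)` iff `a ≤ b` and `a⁺B ⊆ A`,
restriction `(E,e)|(A,a) = (E, e|a)`, and corestriction
`(A,a)|(E,e) = ((a|e)⁺A ∪ (a|e)E, a|e)` (existing iff `a|e` exists). -/
def SzC {T : Type*} [DecidableEq T] (P : PreConst T) : PreConst (Finset T × T) where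
  D p q := P.D p.2 q.2
  mul p q := (p.1, P.mul p.2 q.2)
  plus p := (p.1, P.plus p.2)
  le p q := P.le p.2 q.2 ∧ q.1.image (fun b => P.mul (P.plus p.2) b) ⊆ p.1
  res p q := (p.1, P.res p.2 q.2)
  coE p q := P.coE p.2 q.2
  cor p q := (p.1.image (fun b => P.mul (P.plus (P.cor p.2 q.2)) b) ∪
              q.1.image (fun b => P.mul (P.cor p.2 q.2) b), P.cor p.2 q.2)

/-- The canonical map `ι : T → Sz(T)`, `ι(x) = ({x⁺, x}, x)`. -/
def iotaSz {T : Type*} [DecidableEq T] (P : PreConst T) (x : T) : Finset T × T :=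
  ({P.plus x, x}, x)

/-- An inductive preradiant between li-constellations: conditions (ip1)-(ip5),
where `s ⊗ t = (s|t⁺)t` is the pseudo-product. -/
def IsPreradiant {T L : Type*} (P : PreConst T) (Q : PreConst L) (φ : T → L) : Prop :=
  (∀ x y, P.D x y → Q.coE (φ x) (Q.plus (φ y)) ∧
    Q.coE (Q.plus (φ x)) (Q.plus (φ (P.mul x y))) ∧
    Q.pprod (φ x) (φ y) = Q.pprod (Q.plus (φ x)) (φ (P.mul x y))) ∧
  (∀ x, Q.le (Q.plus (φ x)) (φ (P.plus x))) ∧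
  (∀ x y, P.le x y → Q.le (φ x) (φ y)) ∧
  (∀ x e, P.isPlus e → P.coE x e →
    Q.coE (φ x) (φ e) ∧ φ (P.cor x e) = Q.cor (φ x) (φ e)) ∧
  (∀ e x, P.isPlus e → P.le e (P.plus x) →
    Q.coE (φ e) (Q.plus (φ x)) ∧ Q.plus (φ (P.res e x)) = Q.cor (φ e) (Q.plus (φ x)))

section Helpers
variable {T : Type*} {P : PreConst T} (h : IsLiC P)
include h

lemma D_plus (x : T) : P.D (P.plus x) x ∧ P.mul (P.plus x) x = x :=
  (h.c3 (P.plus x) x ⟨x, rfl⟩).mpr rfl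

lemma D_pp (x : T) : P.D (P.plus x) (P.plus x) := by
  have h1 := D_plus h x
  have := (h.c1 (P.plus x) (P.plus x) x).mpr ⟨h1.1, by rw [h1.2]; exact h1.1⟩
  exact this.1

lemma mul_pp (x : T) : P.mul (P.plus x) (P.plus x) = P.plus x :=
  h.c4 (P.plus x) (P.plus x) ⟨x, rfl⟩ (D_pp h x)

lemma plus_plus (x : T) : P.plus (P.plus x) = P.plus x :=
  ((h.c3 (P.plus x) (P.plus x) ⟨x, rfl⟩).mp ⟨D_pp h x, mul_pp h x⟩).symm

lemma plus_eq {e : T} (he : P.isPlus e) : P.plus e = e := by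
  obtain ⟨z, rfl⟩ := he; exact plus_plus h z

lemma D_self {e : T} (he : P.isPlus e) : P.D e e := by
  obtain ⟨z, rfl⟩ := he; exact D_pp h z

lemma mul_self {e : T} (he : P.isPlus e) : P.mul e e = e := by
  obtain ⟨z, rfl⟩ := he; exact mul_pp h z

lemma D_x_plusy {x y : T} (hd : P.D x y) : P.D x (P.plus y) := by
  have h1 := D_plus h y
  have := (h.c1 x (P.plus y) y).mpr ⟨h1.1, by rw [h1.2]; exact hd⟩
  exact this.1

lemma mul_x_plusy {x y : T} (hd : P.D x y) : P.mul x (P.plus y) = x :=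
  h.c4 (P.plus y) x ⟨y, rfl⟩ (D_x_plusy h hd)

lemma D_plusx_mul {x y : T} (hd : P.D x y) : P.D (P.plus x) (P.mul x y) := by
  have h1 := D_plus h x
  have := (h.c1 (P.plus x) x y).mp ⟨h1.1, hd⟩
  exact this.2

lemma mul_plusx_mul {x y : T} (hd : P.D x y) :
    P.mul (P.plus x) (P.mul x y) = P.mul x y := by
  have h1 := D_plus h x
  have := (h.c2 (P.plus x) x y h1.1 hd).2
  rw [this, h1.2]

lemma plus_mul {x y : T} (hd : P.D x y) : P.plus (P.mul x y) = P.plus x :=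
  ((h.c3 (P.plus x) (P.mul x y) ⟨x, rfl⟩).mp ⟨D_plusx_mul h hd, mul_plusx_mul h hd⟩).symm

/-- Lemma A: for a projection `e ≤ x⁺`, `ex⁺ = e` and `ex = e|x`. -/
lemma lemA {e x : T} (he : P.isPlus e) (hle : P.le e (P.plus x)) :
    P.D e (P.plus x) ∧ P.mul e (P.plus x) = e ∧ P.D e x ∧ P.mul e x = P.res e x := by
  have hpe : P.plus e = e := plus_eq h he
  have hpx : P.isPlus (P.plus x) := ⟨x, rfl⟩
  -- res e (plus x) = e
  have hle' : P.le e (P.plus (P.plus x)) := by rw [plus_plus h x]; exact hle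
  have hres : e = P.res e (P.plus x) := (h.wo3 e (P.plus x) he hle').2.2 e hle hpe
  have hcor := h.wo8 e (P.plus x) he hpx hle
  have hDe : P.D e (P.plus x) := by
    have h4 := (h.wo4 e (P.plus x) hpx).2 hcor.1
    have : P.cor e (P.plus x) = e := by rw [hcor.2, ← hres]
    rw [this] at h4
    exact h4.2.1
  have hmul : P.mul e (P.plus x) = e := h.c4 (P.plus x) e hpx hDe
  have h1 := D_plus h x
  have hDex : P.D e x := by
    have := (h.c1 e (P.plus x) x).mp ⟨hDe, h1.1⟩
    rw [h1.2] at this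
    exact this.2
  refine ⟨hDe, hmul, hDex, ?_⟩
  have hlem : P.le (P.mul e x) x := by
    have := h.wo1 e (P.plus x) x x hle (h.le_refl x) hDex h1.1
    rw [h1.2] at this; exact this
  have hpm : P.plus (P.mul e x) = e := by rw [plus_mul h hDex, hpe]
  exact (h.wo3 e x he hle).2.2 (P.mul e x) hlem hpm

lemma lemB {x y : T} (hle : P.le x y) :
    P.D (P.plus x) (P.plus y) ∧ P.mul (P.plus x) (P.plus y) = P.plus x ∧
    P.D (P.plus x) y ∧ P.mul (P.plus x) y = x := by
  have h2 := h.wo2 x y hle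
  have hA := lemA h ⟨x, rfl⟩ h2
  have hres : x = P.res (P.plus x) y := (h.wo3 (P.plus x) y ⟨x, rfl⟩ h2).2.2 x hle rfl
  exact ⟨hA.1, hA.2.1, hA.2.2.1, by rw [hA.2.2.2, ← hres]⟩

lemma cor_of_D {x e : T} (he : P.isPlus e) (hd : P.D x e) :
    P.coE x e ∧ P.cor x e = x := by
  have h4 := h.wo4 x e he
  have hco : P.coE x e := h4.1.mpr ⟨x, h.le_refl x, hd⟩
  have h42 := h4.2 hco
  exact ⟨hco, h.le_antisymm _ _ h42.1 (h42.2.2 x (h.le_refl x) hd)⟩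

lemma cor_plus_of_le {e f : T} (he : P.isPlus e) (hf : P.isPlus f) (hle : P.le f e) :
    P.coE e f ∧ P.cor e f = f := by
  have h4 := h.wo4 e f hf
  have hco : P.coE e f := h4.1.mpr ⟨f, hle, D_self h hf⟩
  have h9 := h.wo9b e f he hf hco
  have h42 := h4.2 hco
  exact ⟨hco, h.le_antisymm _ _ h9.2.2.1 (h42.2.2 f hle (D_self h hf))⟩

end Helpers

section SzComp
variable {T : Type*} [DecidableEq T] (P : PreConst T)

lemma szplus (p : Finset T × T) : (SzC P).plus p = (p.1, P.plus p.2) := rfl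

lemma szcor (p q : Finset T × T) : (SzC P).cor p q =
    (p.1.image (fun b => P.mul (P.plus (P.cor p.2 q.2)) b) ∪
     q.1.image (fun b => P.mul (P.cor p.2 q.2) b), P.cor p.2 q.2) := rfl

lemma szpprod (p q : Finset T × T) : (SzC P).pprod p q =
    (p.1.image (fun b => P.mul (P.plus (P.cor p.2 (P.plus q.2))) b) ∪
     q.1.image (fun b => P.mul (P.cor p.2 (P.plus q.2)) b),
     P.mul (P.cor p.2 (P.plus q.2)) q.2) := rfl

end SzComp

/-- The canonical map `ι : T → Sz(T)` is an inductive preradiant; moreover,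
whenever the corestriction `x|y⁺` exists,
`ι(x) ⊗ ι(y) = ι(x)⁺ ⊗ ι(x ⊗ y)` for the pseudo-products. -/
theorem stmt16 {T : Type*} [DecidableEq T] (P : PreConst T) (h : IsLiC P) :
    IsPreradiant P (SzC P) (iotaSz P) ∧
    ∀ x y, P.coE x (P.plus y) →
      (SzC P).pprod (iotaSz P x) (iotaSz P y) =
        (SzC P).pprod ((SzC P).plus (iotaSz P x)) (iotaSz P (P.pprod x y)) := by
  have key : ∀ x y, P.coE x (P.plus y) →
      (SzC P).pprod (iotaSz P x) (iotaSz P y) =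
        (SzC P).pprod ((SzC P).plus (iotaSz P x)) (iotaSz P (P.pprod x y)) := by
    intro x y hco
    have hpy : P.isPlus (P.plus y) := ⟨y, rfl⟩
    have h4 := (h.wo4 x (P.plus y) hpy).2 hco
    have hcx : P.le (P.cor x (P.plus y)) x := h4.1
    have hDc : P.D (P.cor x (P.plus y)) (P.plus y) := h4.2.1
    set c := P.cor x (P.plus y) with hc
    have hmce : P.mul c (P.plus y) = c := h.c4 _ _ hpy hDc
    have hDcy : P.D c y := by
      have h1 := D_plus h y
      have := (h.c1 c (P.plus y) y).mp ⟨hDc, h1.1⟩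
      rw [h1.2] at this; exact this.2
    have hB := lemB h hcx
    have hpp : P.plus (P.mul c y) = P.plus c := plus_mul h hDcy
    have hcor2 : P.cor (P.plus x) (P.plus (P.mul c y)) = P.plus c := by
      rw [hpp]
      exact (cor_plus_of_le h ⟨x, rfl⟩ ⟨c, rfl⟩ (h.wo2 _ _ hcx)).2
    rw [szpprod, szpprod, szplus]
    simp only [iotaSz, PreConst.pprod, ← hc]
    rw [hcor2, hpp, plus_plus h c]
    simp only [Finset.image_insert, Finset.image_singleton, Prod.mk.injEq]
    rw [hB.2.1, hB.2.2.2, hmce, mul_pp h c, mul_plusx_mul h hDcy]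
    refine ⟨?_, rfl⟩
    ext t
    simp only [Finset.mem_union, Finset.mem_insert, Finset.mem_singleton]
    tauto
  refine ⟨⟨?_, ?_, ?_, ?_, ?_⟩, key⟩
  · -- ip1
    intro x y hd
    have hDxp : P.D x (P.plus y) := D_x_plusy h hd
    have hcxy := cor_of_D h ⟨y, rfl⟩ hDxp
    refine ⟨hcxy.1, ?_, ?_⟩
    · show P.coE (P.plus x) (P.plus (P.mul x y))
      rw [plus_mul h hd]
      exact (h.wo8 _ _ ⟨x, rfl⟩ ⟨x, rfl⟩ (h.le_refl _)).1
    · have := key x y hcxy.1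
      rw [show P.pprod x y = P.mul x y from by unfold PreConst.pprod; rw [hcxy.2]] at this
      exact this
  · -- ip2
    intro x
    refine ⟨h.le_refl (P.plus x), ?_⟩
    intro t ht
    simp only [szplus, iotaSz, Finset.image_insert, Finset.image_singleton,
      Finset.mem_insert, Finset.mem_singleton, plus_plus h x, mul_pp h x] at ht
    simp only [szplus, iotaSz, Finset.mem_insert, Finset.mem_singleton]
    tauto
  · -- ip3
    intro x y hle
    have hB := lemB h hle
    refine ⟨hle, ?_⟩
    intro t ht
    simp only [iotaSz, Finset.image_insert, Finset.image_singleton, Finset.mem_insert,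
      Finset.mem_singleton, hB.2.1, hB.2.2.2] at ht
    simp only [iotaSz, Finset.mem_insert, Finset.mem_singleton]
    tauto
  · -- ip4
    intro x e he hco
    refine ⟨hco, ?_⟩
    have h4 := (h.wo4 x e he).2 hco
    have hcx : P.le (P.cor x e) x := h4.1
    have hDce : P.D (P.cor x e) e := h4.2.1
    have hB := lemB h hcx
    have hmul : P.mul (P.cor x e) e = P.cor x e := h.c4 e _ he hDce
    have hmul' : P.mul (P.cor x e) (P.plus e) = P.cor x e := by
      rw [plus_eq h he]; exact hmul
    rw [szcor]
    simp only [iotaSz, Prod.mk.injEq]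
    simp only [Finset.image_insert, Finset.image_singleton]
    rw [hB.2.1, hB.2.2.2, hmul, hmul']
    refine ⟨?_, trivial⟩
    ext t
    simp only [Finset.mem_union, Finset.mem_insert, Finset.mem_singleton]
    tauto
  · -- ip5
    intro e x he hle
    have hA := lemA h he hle
    have hc := cor_of_D h ⟨x, rfl⟩ hA.1
    refine ⟨hc.1, ?_⟩
    have hr := h.wo3 e x he hle
    rw [szcor, szplus, szplus]
    simp only [iotaSz, Prod.mk.injEq]
    rw [hc.2, hr.2.1, plus_eq h he]
    simp only [Finset.image_insert, Finset.image_singleton]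
    rw [mul_self h he, hA.2.1, hA.2.2.2]
    refine ⟨?_, trivial⟩
    ext t
    simp only [Finset.mem_union, Finset.mem_insert, Finset.mem_singleton]
    tauto
end

section
/- Let C be a category equipped with a left restriction structure (so C is in particular a left restriction semigroupoid). Then the associated li-constellation C(C) is non-degenerate and unitary. Conversely, if (T,≤) is a non-degenerate and unitary li-constellation, then the associated left restriction semigroupoid G(T) is a left restriction category (i.e., it admits compatible identity structure making it a category). -/
/-- A "pre-semigroupoid": a carrier with a definedness predicate `D`,
a (total, but only meaningful on `D`) multiplication, and a unary operation `plus`. -/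
structure PreSgpd (S : Type*) where
  D : S → S → Prop
  mul : S → S → S
  plus : S → S

/-- `e` lies in `S⁺`, the image of the unary operation. -/
def PreSgpd.isPlus {S : Type*} (A : PreSgpd S) (e : S) : Prop := ∃ s, e = A.plus s

/-- The natural partial order of a left restriction semigroupoid:
`s ≤ t` iff `s⁺t` is defined and `s⁺t = s`. -/
def PreSgpd.le {S : Type*} (A : PreSgpd S) (s t : S) : Prop :=
  A.D (A.plus s) t ∧ A.mul (A.plus s) t = s

/-- `A` is a left restriction semigroupoid: the associativity axioms of a
semigroupoid together with (lr1)-(lr4). -/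
structure IsLRS {S : Type*} (A : PreSgpd S) : Prop where
  assoc1 : ∀ s t r, A.D s t → A.D t r →
    A.D (A.mul s t) r ∧ A.D s (A.mul t r) ∧ A.mul (A.mul s t) r = A.mul s (A.mul t r)
  assoc2 : ∀ s t r, A.D s t → A.D (A.mul s t) r →
    A.D t r ∧ A.D s (A.mul t r) ∧ A.mul (A.mul s t) r = A.mul s (A.mul t r)
  assoc3 : ∀ s t r, A.D t r → A.D s (A.mul t r) →
    A.D s t ∧ A.D (A.mul s t) r ∧ A.mul (A.mul s t) r = A.mul s (A.mul t r)
  lr1 : ∀ s, A.D (A.plus s) s ∧ A.mul (A.plus s) s = s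
  lr2 : ∀ s t, (A.D (A.plus s) (A.plus t) ↔ A.D (A.plus t) (A.plus s)) ∧
    (A.D (A.plus s) (A.plus t) → A.mul (A.plus s) (A.plus t) = A.mul (A.plus t) (A.plus s))
  lr3 : ∀ s t, A.D (A.plus s) t →
    A.D (A.plus s) (A.plus t) ∧ A.plus (A.mul (A.plus s) t) = A.mul (A.plus s) (A.plus t)
  lr4 : ∀ s t, A.D s t →
    A.D s (A.plus t) ∧ A.D (A.plus (A.mul s t)) s ∧
      A.mul s (A.plus t) = A.mul (A.plus (A.mul s t)) s

/-- The li-constellation `C(S)` associated to a left restriction semigroupoid: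
same carrier and `+`; `s • t` is defined iff `st⁺` is defined and `st⁺ = s`;
the order is the natural partial order; restriction `e|s = es`;
corestriction `s|e` exists iff `se` is defined, and then equals `se`. -/
def CofS {S : Type*} (A : PreSgpd S) : PreConst S where
  D s t := A.D s (A.plus t) ∧ A.mul s (A.plus t) = s
  mul := A.mul
  plus := A.plus
  le s t := A.D (A.plus s) t ∧ A.mul (A.plus s) t = s
  res e s := A.mul e s
  coE s e := A.D s e
  cor s e := A.mul s e

/-- The left restriction semigroupoid `G(T)` associated to an li-constellation:
same carrier and `+`; `x ⊗ y` is defined iff the corestriction `x|y⁺` exists,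
and then `x ⊗ y = (x|y⁺)y`. -/
def GofT {T : Type*} (P : PreConst T) : PreSgpd T where
  D x y := P.coE x (P.plus y)
  mul x y := P.mul (P.cor x (P.plus y)) y
  plus := P.plus

/-- `e` is an identity of the semigroupoid: `ee` is defined, and `e` is a left
and right identity wherever composition with it is defined. -/
def IsIdentity {S : Type*} (A : PreSgpd S) (e : S) : Prop :=
  A.D e e ∧ (∀ s, A.D e s → A.mul e s = s) ∧ (∀ s, A.D s e → A.mul s e = s)

/-- A left restriction category: a left restriction semigroupoid admitting a
compatible identity structure making it a category (every element has a domain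
identity and a range identity, and composability is governed by identities). -/
def IsLRCat {S : Type*} (A : PreSgpd S) : Prop :=
  IsLRS A ∧
  (∀ s, ∃ e, IsIdentity A e ∧ A.D e s) ∧
  (∀ s, ∃ e, IsIdentity A e ∧ A.D s e) ∧
  (∀ s t, A.D s t ↔ ∃ e, IsIdentity A e ∧ A.D s e ∧ A.D e t)

/-- Non-degenerate: every `x` admits some `e ∈ T⁺` with the corestriction `x|e`
existing. -/
def IsND {T : Type*} (P : PreConst T) : Prop :=
  ∀ x, ∃ e, P.isPlus e ∧ P.coE x e

/-- Locally complete: each connected component of `(T⁺, ≤)` has a maximum. -/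
def IsLC {T : Type*} (P : PreConst T) : Prop :=
  ∀ e, P.isPlus e → ∃ m, P.isPlus m ∧ P.connected e m ∧
    ∀ f, P.isPlus f → P.connected f m → P.le f m

/-- Unitary: locally complete, and for every maximum `1` of a connected
component of `(T⁺,≤)`, `x|1 = x` whenever `x|1` exists. -/
def IsUnitary {T : Type*} (P : PreConst T) : Prop :=
  IsLC P ∧ ∀ m, P.isPlus m → (∀ f, P.isPlus f → P.connected f m → P.le f m) →
    ∀ x, P.coE x m → P.cor x m = x

section Dir1
variable {S : Type*} {A : PreSgpd S}

lemma lrs_pp (hA : IsLRS A) (s : S) : A.plus (A.plus s) = A.plus s := by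
  have h1 := hA.lr1 s
  have h3 := hA.lr3 s s h1.1
  have hss : A.mul (A.plus s) (A.plus s) = A.plus s := by
    have := h3.2; rw [h1.2] at this; exact this.symm
  have h4 := hA.lr3 s (A.plus s) h3.1
  have h5 : A.plus (A.plus s) = A.mul (A.plus s) (A.plus (A.plus s)) := by
    have := h4.2; rw [hss] at this; exact this
  have h6 := (hA.lr2 s (A.plus s)).2 h4.1
  have h7 := (hA.lr1 (A.plus s)).2
  rw [h6, h7] at h5
  exact h5

lemma ident_plus (hA : IsLRS A) {e : S} (he : IsIdentity A e) : A.plus e = e := by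
  have h1 := hA.lr1 e
  have h2 := he.2.2 (A.plus e) h1.1
  rw [← h2]; exact h1.2

lemma cod_unique (hA : IsLRS A) {s i j : S} (hi : IsIdentity A i) (hj : IsIdentity A j)
    (h1 : A.D s i) (h2 : A.D s j) : i = j := by
  have hsi : A.mul s i = s := hi.2.2 s h1
  have h3 := hA.assoc2 s i j h1 (by rw [hsi]; exact h2)
  have h4 : A.mul i j = j := hi.2.1 j h3.1
  have h5 : A.mul i j = i := hj.2.2 i h3.1
  rw [← h4, h5]

lemma plus_of_isPlus (hA : IsLRS A) {e : S} (he : A.isPlus e) : A.plus e = e := by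
  obtain ⟨s, rfl⟩ := he; exact lrs_pp hA s

lemma plus_le_ident (hA : IsLRS A) {e i : S} (he : A.isPlus e) (hi : IsIdentity A i)
    (hD : A.D e i) : (CofS A).le e i := by
  constructor
  · show A.D (A.plus e) i
    rw [plus_of_isPlus hA he]; exact hD
  · show A.mul (A.plus e) i = e
    rw [plus_of_isPlus hA he]; exact hi.2.2 e hD

lemma cod_const (hA : IsLRS A) {a b i j : S} (hconn : (CofS A).connected a b)
    (hi : IsIdentity A i) (hj : IsIdentity A j)
    (hai : A.D a i) : A.D b j → i = j := by
  induction hconn with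
  | refl => exact fun haj => cod_unique hA hi hj hai haj
  | tail hab step ih =>
    rename_i b c
    intro hcj
    obtain ⟨hbp, hcp, hor⟩ := step
    apply ih
    rcases hor with h | h
    · obtain ⟨hD, hE⟩ := h
      rw [plus_of_isPlus hA hbp] at hD hE
      have := hA.assoc1 b c j hD hcj
      rw [hE] at this
      exact this.1
    · obtain ⟨hD, hE⟩ := h
      rw [plus_of_isPlus hA hcp] at hD hE
      have := hA.assoc2 c b j hD (by rw [hE]; exact hcj)
      exact this.1

theorem dir1 (h : IsLRCat A) : IsND (CofS A) ∧ IsUnitary (CofS A) := by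
  obtain ⟨hA, hdom, hcod, hcomp⟩ := h
  have idplus : ∀ {i : S}, IsIdentity A i → A.isPlus i :=
    fun hi => ⟨_, (ident_plus hA hi).symm⟩
  constructor
  · intro x
    obtain ⟨i, hi, hDxi⟩ := hcod x
    exact ⟨i, idplus hi, hDxi⟩
  · have hLC : IsLC (CofS A) := by
      intro e hep
      obtain ⟨m, hm, hDem⟩ := hcod e
      refine ⟨m, idplus hm, Relation.ReflTransGen.single
        ⟨hep, idplus hm, Or.inl (plus_le_ident hA hep hm hDem)⟩, ?_⟩
      intro f hfp hconn
      obtain ⟨k, hk, hDfk⟩ := hcod f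
      have hkm : k = m := cod_const hA hconn hk hm hDfk hm.1
      rw [← hkm]
      exact plus_le_ident hA hfp hk hDfk
    refine ⟨hLC, ?_⟩
    intro m hmp hmax x hcoE
    obtain ⟨i, hi, hDmi⟩ := hcod m
    have h1 : (CofS A).le m i := plus_le_ident hA hmp hi hDmi
    have h2 : (CofS A).le i m :=
      hmax i (idplus hi) (Relation.ReflTransGen.single ⟨idplus hi, hmp, Or.inr h1⟩)
    have hmi : m = i := by
      obtain ⟨hD, hE⟩ := h2
      rw [plus_of_isPlus hA (idplus hi)] at hD hE
      rw [← hE, hi.2.1 m hD]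
    show A.mul x m = x
    rw [hmi] at hcoE ⊢
    exact hi.2.2 x hcoE

end Dir1
section Dir2
variable {T : Type*} {P : PreConst T}

lemma cst_Dpx (hP : IsLiC P) (x : T) :
    P.D (P.plus x) x ∧ P.mul (P.plus x) x = x :=
  (hP.c3 (P.plus x) x ⟨x, rfl⟩).mpr rfl

lemma cst_pp (hP : IsLiC P) (x : T) : P.plus (P.plus x) = P.plus x := by
  have h2 := cst_Dpx hP (P.plus x)
  have h4 := hP.c4 (P.plus x) (P.plus (P.plus x)) ⟨x, rfl⟩ h2.1
  rw [← h4]; exact h2.2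

lemma cst_peq (hP : IsLiC P) {e : T} (he : P.isPlus e) : P.plus e = e := by
  obtain ⟨x, rfl⟩ := he; exact cst_pp hP x

lemma cst_Dee (hP : IsLiC P) {e : T} (he : P.isPlus e) :
    P.D e e ∧ P.mul e e = e := by
  have := cst_Dpx hP e
  rwa [cst_peq hP he] at this

lemma cst_Dcancel (hP : IsLiC P) {u v : T} (h : P.D u (P.plus v)) : P.D u v := by
  have h1 := (hP.c1 u (P.plus v) v).mp ⟨h, (cst_Dpx hP v).1⟩
  rw [(cst_Dpx hP v).2] at h1
  exact h1.2

lemma cst_mul_plus (hP : IsLiC P) {x y : T} (hxy : P.D x y) :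
    P.plus (P.mul x y) = P.plus x := by
  have h1 := (hP.c1 (P.plus x) x y).mp ⟨(cst_Dpx hP x).1, hxy⟩
  have h2 := hP.c2 (P.plus x) x y (cst_Dpx hP x).1 hxy
  rw [(cst_Dpx hP x).2] at h2
  exact ((hP.c3 (P.plus x) (P.mul x y) ⟨x, rfl⟩).mp ⟨h1.2, h2.2⟩).symm

lemma cst_coE_self (hP : IsLiC P) {e : T} (he : P.isPlus e) : P.coE e e :=
  (hP.wo4 e e he).1.mpr ⟨e, hP.le_refl e, (cst_Dee hP he).1⟩

lemma cst_le_plus (hP : IsLiC P) {e f : T} (he : P.isPlus e) (hf : P.isPlus f)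
    (hef : P.le e f) : P.D e f ∧ P.mul e f = e ∧ P.cor e f = e := by
  have h8 := hP.wo8 e f he hf hef
  have h9 := hP.wo9b e f he hf h8.1
  have hcor : P.cor e f = e :=
    hP.le_antisymm _ _ h9.2.1 (h9.2.2.2 e he (hP.le_refl e) hef)
  have hD : P.D e f := by
    have := ((hP.wo4 e f hf).2 h8.1).2.1
    rwa [hcor] at this
  exact ⟨hD, hP.c4 f e hf hD, hcor⟩

lemma cst_meet (hP : IsLiC P) {e f : T} (he : P.isPlus e) (hf : P.isPlus f)
    (h : P.coE e f) : P.coE f e ∧ P.cor e f = P.cor f e := by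
  have h9 := hP.wo9b e f he hf h
  have hconn : P.connected f e :=
    Relation.ReflTransGen.head ⟨hf, h9.1, Or.inr h9.2.2.1⟩
      (Relation.ReflTransGen.single ⟨h9.1, he, Or.inl h9.2.1⟩)
  have hfe : P.coE f e := hP.wo9a f e hf he hconn
  have h9' := hP.wo9b f e hf he hfe
  refine ⟨hfe, hP.le_antisymm _ _ ?_ ?_⟩
  · exact h9'.2.2.2 _ h9.1 h9.2.2.1 h9.2.1
  · exact h9.2.2.2 _ h9'.1 h9'.2.2.1 h9'.2.1

lemma cst_corD' (hP : IsLiC P) {x y : T} (h : P.coE x (P.plus y)) :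
    P.D (P.cor x (P.plus y)) y :=
  cst_Dcancel hP ((hP.wo4 x (P.plus y) ⟨y, rfl⟩).2 h).2.1

lemma conn_symm {a b : T} (h : P.connected a b) : P.connected b a := by
  induction h with
  | refl => exact Relation.ReflTransGen.refl
  | tail hab step ih =>
    exact Relation.ReflTransGen.head ⟨step.2.1, step.1, step.2.2.symm⟩ ih

lemma g_mul_pp (hP : IsLiC P) {e f : T} (hf : P.isPlus f) (h : P.coE e f) :
    (GofT P).mul e f = P.cor e f := by
  show P.mul (P.cor e (P.plus f)) f = P.cor e f
  rw [cst_peq hP hf]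
  exact hP.c4 f _ hf ((hP.wo4 e f hf).2 h).2.1

lemma g_lr1 (hP : IsLiC P) (s : T) :
    (GofT P).D ((GofT P).plus s) s ∧ (GofT P).mul ((GofT P).plus s) s = s := by
  constructor
  · show P.coE (P.plus s) (P.plus s)
    exact cst_coE_self hP ⟨s, rfl⟩
  · show P.mul (P.cor (P.plus s) (P.plus s)) s = s
    rw [(cst_le_plus hP ⟨s, rfl⟩ ⟨s, rfl⟩ (hP.le_refl _)).2.2]
    exact (cst_Dpx hP s).2

lemma g_D_left (hP : IsLiC P) {x y : T} (hxy : P.coE x (P.plus y)) (z : T) :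
    P.coE ((GofT P).mul x y) (P.plus z) ↔ P.coE y (P.plus z) :=
  hP.wo5 (P.cor x (P.plus y)) y (P.plus z) ⟨z, rfl⟩ (cst_corD' hP hxy)

lemma g_D_right (hP : IsLiC P) {y z : T} (hyz : P.coE y (P.plus z)) (x : T) :
    P.coE x (P.plus ((GofT P).mul y z)) ↔ P.coE x (P.plus y) := by
  have hDqz := cst_corD' hP hyz
  have hq_le : P.le (P.cor y (P.plus z)) y := ((hP.wo4 y _ ⟨z, rfl⟩).2 hyz).1
  show P.coE x (P.plus (P.mul (P.cor y (P.plus z)) z)) ↔ P.coE x (P.plus y)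
  rw [cst_mul_plus hP hDqz]
  exact (hP.wo6 x (P.plus y) _ ⟨y, rfl⟩ ⟨_, rfl⟩ (hP.wo2 _ _ hq_le)).symm

end Dir2
section Dir2b
variable {T : Type*} {P : PreConst T}

lemma g_assoc_eq (hP : IsLiC P) {x y z : T}
    (hxy : P.coE x (P.plus y)) (hyz : P.coE y (P.plus z)) :
    (GofT P).mul ((GofT P).mul x y) z = (GofT P).mul x ((GofT P).mul y z) := by
  have hypl : P.isPlus (P.plus y) := ⟨y, rfl⟩
  have hzpl : P.isPlus (P.plus z) := ⟨z, rfl⟩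
  set p := P.cor x (P.plus y) with hp
  set q := P.cor y (P.plus z) with hq
  have hqpl : P.isPlus (P.plus q) := ⟨q, rfl⟩
  have hDpy : P.D p y := cst_corD' hP hxy
  have hDqz : P.D q z := cst_corD' hP hyz
  have hwo4x := (hP.wo4 x (P.plus y) hypl).2 hxy
  have hwo4y := (hP.wo4 y (P.plus z) hzpl).2 hyz
  have hqley : P.le q y := hwo4y.1
  have hplex : P.le p x := hwo4x.1
  have hqp_le : P.le (P.plus q) (P.plus y) := hP.wo2 _ _ hqley
  have hcoxq : P.coE x (P.plus q) := (hP.wo6 x (P.plus y) (P.plus q) hypl hqpl hqp_le).mp hxy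
  set r := P.cor x (P.plus q) with hr
  have hwo4r := (hP.wo4 x (P.plus q) hqpl).2 hcoxq
  have hrlex : P.le r x := hwo4r.1
  have hDrq' : P.D r (P.plus q) := hwo4r.2.1
  have hDrq : P.D r q := cst_Dcancel hP hDrq'
  have hDqpyp : P.D (P.plus q) (P.plus y) := (cst_le_plus hP hqpl hypl hqp_le).1
  have hDryp : P.D r (P.plus y) := by
    have h2 := hP.c2 r (P.plus q) (P.plus y) hDrq' hDqpyp
    rw [hP.c4 (P.plus q) r hqpl hDrq'] at h2
    exact h2.1
  have hrlep : P.le r p := hwo4x.2.2 r hrlex hDryp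
  have hDpyT : P.coE (P.mul p y) (P.plus z) := (hP.wo5 p y (P.plus z) hzpl hDpy).mpr hyz
  set w := P.cor (P.mul p y) (P.plus z) with hw
  have hcopq : P.coE p (P.plus q) := by
    have hcopy : P.coE p (P.plus y) :=
      (hP.wo4 p _ hypl).1.mpr ⟨p, hP.le_refl p, hwo4x.2.1⟩
    exact (hP.wo6 p (P.plus y) (P.plus q) hypl hqpl hqp_le).mp hcopy
  have hwo4p := (hP.wo4 p (P.plus q) hqpl).2 hcopq
  have hcorpq : P.cor p (P.plus q) = r := by
    apply hP.le_antisymm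
    · exact hwo4r.2.2 _ (hP.le_trans _ _ _ hwo4p.1 hplex) hwo4p.2.1
    · exact hwo4p.2.2 r hrlep hDrq'
  have hw7 := hP.wo7 p y (P.plus z) hzpl hDpy hDpyT
  rw [← hq, hcorpq, ← hw] at hw7
  have h2 := hP.c2 r q z hDrq hDqz
  have hrqpy : P.le (P.mul r q) (P.mul p y) := hP.wo1 r p q y hrlep hqley hDrq hDpy
  have hplusrq : P.plus (P.mul r q) = P.plus r := cst_mul_plus hP hDrq
  have hrp_le : P.le (P.plus r) (P.plus (P.mul p y)) := by
    rw [cst_mul_plus hP hDpy]; exact hP.wo2 _ _ hrlep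
  have hw3 := hP.wo3 (P.plus r) (P.mul p y) ⟨r, rfl⟩ hrp_le
  have e1 := hw3.2.2 w ((hP.wo4 _ _ hzpl).2 hDpyT).1 hw7
  have e2 := hw3.2.2 (P.mul r q) hrqpy hplusrq
  show P.mul (P.cor (P.mul (P.cor x (P.plus y)) y) (P.plus z)) z
      = P.mul (P.cor x (P.plus (P.mul (P.cor y (P.plus z)) z))) (P.mul (P.cor y (P.plus z)) z)
  rw [← hp, ← hq, cst_mul_plus hP hDqz, ← hr, ← hw, e1, ← e2, ← h2.2]

lemma g_lr3 (hP : IsLiC P) (s t : T) (h : (GofT P).D ((GofT P).plus s) t) :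
    (GofT P).D ((GofT P).plus s) ((GofT P).plus t) ∧
      (GofT P).plus ((GofT P).mul ((GofT P).plus s) t)
        = (GofT P).mul ((GofT P).plus s) ((GofT P).plus t) := by
  have h' : P.coE (P.plus s) (P.plus t) := h
  have hcor := (hP.wo4 (P.plus s) (P.plus t) ⟨t, rfl⟩).2 h'
  have h9 := hP.wo9b (P.plus s) (P.plus t) ⟨s, rfl⟩ ⟨t, rfl⟩ h'
  constructor
  · show P.coE (P.plus s) (P.plus (P.plus t))
    rwa [cst_pp hP t]
  · show P.plus (P.mul (P.cor (P.plus s) (P.plus t)) t)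
        = P.mul (P.cor (P.plus s) (P.plus (P.plus t))) (P.plus t)
    rw [cst_pp hP t, cst_mul_plus hP (cst_corD' hP h'), cst_peq hP h9.1]
    exact (hP.c4 (P.plus t) _ ⟨t, rfl⟩ hcor.2.1).symm

lemma g_lr4 (hP : IsLiC P) (s t : T) (h : (GofT P).D s t) :
    (GofT P).D s ((GofT P).plus t) ∧
      (GofT P).D ((GofT P).plus ((GofT P).mul s t)) s ∧
        (GofT P).mul s ((GofT P).plus t)
          = (GofT P).mul ((GofT P).plus ((GofT P).mul s t)) s := by
  have h' : P.coE s (P.plus t) := h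
  have hwo4 := (hP.wo4 s (P.plus t) ⟨t, rfl⟩).2 h'
  set a := P.cor s (P.plus t) with ha
  have haD : P.D a (P.plus t) := hwo4.2.1
  have haDt : P.D a t := cst_Dcancel hP haD
  have ha_le : P.le a s := hwo4.1
  have hap_le : P.le (P.plus a) (P.plus s) := hP.wo2 _ _ ha_le
  have hple := cst_le_plus hP ⟨a, rfl⟩ ⟨s, rfl⟩ hap_le
  have hcoas : P.coE (P.plus a) (P.plus s) := (hP.wo8 _ _ ⟨a, rfl⟩ ⟨s, rfl⟩ hap_le).1
  have hplusmul : P.plus (P.mul a t) = P.plus a := cst_mul_plus hP haDt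
  have hDaps : P.D (P.plus a) s := by
    have := cst_corD' hP hcoas
    rwa [hple.2.2] at this
  refine ⟨?_, ?_, ?_⟩
  · show P.coE s (P.plus (P.plus t))
    rwa [cst_pp hP t]
  · show P.coE (P.plus (P.mul (P.cor s (P.plus t)) t)) (P.plus s)
    rw [← ha, hplusmul]
    exact hcoas
  · show P.mul (P.cor s (P.plus (P.plus t))) (P.plus t)
        = P.mul (P.cor (P.plus (P.mul (P.cor s (P.plus t)) t)) (P.plus s)) s
    have hw3 := hP.wo3 (P.plus a) s ⟨a, rfl⟩ hap_le
    have e1 := hw3.2.2 a ha_le rfl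
    have hle2 : P.le (P.mul (P.plus a) s) s := by
      have := hP.wo1 (P.plus a) (P.plus s) s s hap_le (hP.le_refl s) hDaps (cst_Dpx hP s).1
      rwa [(cst_Dpx hP s).2] at this
    have e2 := hw3.2.2 (P.mul (P.plus a) s) hle2
      (by rw [cst_mul_plus hP hDaps, cst_pp hP])
    rw [cst_pp hP t, ← ha, hplusmul, hple.2.2, hP.c4 (P.plus t) a ⟨t, rfl⟩ haD]
    exact e1.trans e2.symm

end Dir2b
section Dir2c
variable {T : Type*} {P : PreConst T}

lemma g_lrs (hP : IsLiC P) : IsLRS (GofT P) := by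
  constructor
  · -- assoc1
    intro s t r hst htr
    exact ⟨(g_D_left hP hst r).mpr htr, (g_D_right hP htr s).mpr hst, g_assoc_eq hP hst htr⟩
  · -- assoc2
    intro s t r hst hstr
    have htr : P.coE t (P.plus r) := (g_D_left hP hst r).mp hstr
    exact ⟨htr, (g_D_right hP htr s).mpr hst, g_assoc_eq hP hst htr⟩
  · -- assoc3
    intro s t r htr hs_tr
    have hst : P.coE s (P.plus t) := (g_D_right hP htr s).mp hs_tr
    exact ⟨hst, (g_D_left hP hst r).mpr htr, g_assoc_eq hP hst htr⟩
  · exact g_lr1 hP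
  · -- lr2
    intro s t
    constructor
    · show P.coE (P.plus s) (P.plus (P.plus t)) ↔ P.coE (P.plus t) (P.plus (P.plus s))
      rw [cst_pp hP t, cst_pp hP s]
      exact ⟨fun h => (cst_meet hP ⟨s, rfl⟩ ⟨t, rfl⟩ h).1,
        fun h => (cst_meet hP ⟨t, rfl⟩ ⟨s, rfl⟩ h).1⟩
    · intro h
      have h' : P.coE (P.plus s) (P.plus t) := by
        have : P.coE (P.plus s) (P.plus (P.plus t)) := h
        rwa [cst_pp hP t] at this
      have hmeet := cst_meet hP ⟨s, rfl⟩ ⟨t, rfl⟩ h'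
      calc (GofT P).mul (P.plus s) (P.plus t) = P.cor (P.plus s) (P.plus t) :=
            g_mul_pp hP ⟨t, rfl⟩ h'
        _ = P.cor (P.plus t) (P.plus s) := hmeet.2
        _ = (GofT P).mul (P.plus t) (P.plus s) := (g_mul_pp hP ⟨s, rfl⟩ hmeet.1).symm
  · exact g_lr3 hP
  · exact g_lr4 hP

lemma g_max_ident (hP : IsLiC P) {m : T} (hm : P.isPlus m)
    (hmax : ∀ f, P.isPlus f → P.connected f m → P.le f m)
    (hUni : ∀ m', P.isPlus m' → (∀ f, P.isPlus f → P.connected f m' → P.le f m') →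
      ∀ x, P.coE x m' → P.cor x m' = x) :
    IsIdentity (GofT P) m := by
  refine ⟨?_, ?_, ?_⟩
  · show P.coE m (P.plus m)
    rw [cst_peq hP hm]
    exact cst_coE_self hP hm
  · intro s h
    have h' : P.coE m (P.plus s) := h
    have h9 := hP.wo9b m (P.plus s) hm ⟨s, rfl⟩ h'
    have hconn : P.connected (P.plus s) m :=
      Relation.ReflTransGen.head ⟨⟨s, rfl⟩, h9.1, Or.inr h9.2.2.1⟩
        (Relation.ReflTransGen.single ⟨h9.1, hm, Or.inl h9.2.1⟩)
    have hsm : P.le (P.plus s) m := hmax _ ⟨s, rfl⟩ hconn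
    have hks : P.cor m (P.plus s) = P.plus s :=
      hP.le_antisymm _ _ h9.2.2.1 (h9.2.2.2 (P.plus s) ⟨s, rfl⟩ hsm (hP.le_refl _))
    show P.mul (P.cor m (P.plus s)) s = s
    rw [hks]
    exact (cst_Dpx hP s).2
  · intro s h
    have h' : P.coE s m := by
      have : P.coE s (P.plus m) := h
      rwa [cst_peq hP hm] at this
    have hcor : P.cor s m = s := hUni m hm hmax s h'
    have hDsm : P.D s m := by
      have := ((hP.wo4 s m hm).2 h').2.1
      rwa [hcor] at this
    show P.mul (P.cor s (P.plus m)) m = s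
    rw [cst_peq hP hm, hcor]
    exact hP.c4 m s hm hDsm

lemma g_ident_plus (hP : IsLiC P) {e : T} (hI : IsIdentity (GofT P) e) :
    P.plus e = e := by
  have h1 := g_lr1 hP e
  have h2 := hI.2.2 (P.plus e) h1.1
  exact h2.symm.trans h1.2

lemma g_ident_ge (hP : IsLiC P) {e t : T} (hI : IsIdentity (GofT P) e)
    (h : (GofT P).D e t) : P.le (P.plus t) e := by
  have he : P.isPlus e := ⟨e, (g_ident_plus hP hI).symm⟩
  have h' : P.coE e (P.plus t) := h
  have ht : P.mul (P.cor e (P.plus t)) t = t := hI.2.1 t h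
  have hD : P.D (P.cor e (P.plus t)) t := cst_corD' hP h'
  have hplus : P.plus t = P.cor e (P.plus t) := by
    have h9 := hP.wo9b e (P.plus t) he ⟨t, rfl⟩ h'
    have h0 : P.plus t = P.plus (P.mul (P.cor e (P.plus t)) t) := by rw [ht]
    exact h0.trans ((cst_mul_plus hP hD).trans (cst_peq hP h9.1))
  rw [hplus]
  exact (hP.wo9b e (P.plus t) he ⟨t, rfl⟩ h').2.1

theorem dir2 (hP : IsLiC P) (hND : IsND P) (hU : IsUnitary P) :
    IsLRCat (GofT P) := by
  obtain ⟨hLC, hUni⟩ := hU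
  refine ⟨g_lrs hP, ?_, ?_, ?_⟩
  · intro s
    obtain ⟨m, hm, hconn, hmax⟩ := hLC (P.plus s) ⟨s, rfl⟩
    refine ⟨m, g_max_ident hP hm hmax hUni, ?_⟩
    show P.coE m (P.plus s)
    exact hP.wo9a m (P.plus s) hm ⟨s, rfl⟩ (conn_symm hconn)
  · intro s
    obtain ⟨e, hep, hcoe⟩ := hND s
    obtain ⟨m, hm, hconn, hmax⟩ := hLC e hep
    have hle : P.le e m := hmax e hep hconn
    refine ⟨m, g_max_ident hP hm hmax hUni, ?_⟩
    show P.coE s (P.plus m)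
    rw [cst_peq hP hm]
    exact (hP.wo6 s m e hm hep hle).mpr hcoe
  · intro s t
    constructor
    · intro h
      have h' : P.coE s (P.plus t) := h
      obtain ⟨m, hm, hconn, hmax⟩ := hLC (P.plus t) ⟨t, rfl⟩
      have hle : P.le (P.plus t) m := hmax _ ⟨t, rfl⟩ hconn
      refine ⟨m, g_max_ident hP hm hmax hUni, ?_, ?_⟩
      · show P.coE s (P.plus m)
        rw [cst_peq hP hm]
        exact (hP.wo6 s m (P.plus t) hm ⟨t, rfl⟩ hle).mpr h'
      · show P.coE m (P.plus t)
        exact hP.wo9a m (P.plus t) hm ⟨t, rfl⟩ (conn_symm hconn)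
    · rintro ⟨e, hI, hse, het⟩
      have hep : P.isPlus e := ⟨e, (g_ident_plus hP hI).symm⟩
      have hle : P.le (P.plus t) e := g_ident_ge hP hI het
      have hse' : P.coE s e := by
        have : P.coE s (P.plus e) := hse
        rwa [cst_peq hP hep] at this
      show P.coE s (P.plus t)
      exact (hP.wo6 s e (P.plus t) hep ⟨t, rfl⟩ hle).mp hse'

end Dir2c

/-- If `C` is a left restriction category then the li-constellation `C(C)` is
non-degenerate and unitary; conversely, if `(T,≤)` is a non-degenerate unitary
li-constellation then `G(T)` is a left restriction category. -/
theorem stmt18 {S T : Type*} (A : PreSgpd S) (P : PreConst T) :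
    (IsLRCat A → IsND (CofS A) ∧ IsUnitary (CofS A)) ∧
    (IsLiC P → IsND P → IsUnitary P → IsLRCat (GofT P)) := by
  exact ⟨dir1, dir2⟩
end

section
/- A left restriction semigroupoid (S,+) is a left restriction semigroup (i.e., S⁽²⁾ = S × S) if and only if the associated li-constellation C(S) is non-degenerate and (C(S)⁺, ≤) is a meet-semilattice, if and only if in C(S) the corestriction x|e exists for every x ∈ C(S) and every e ∈ C(S)⁺. -/
/-- `(T⁺, ≤)` is a meet-semilattice: any two elements of `T⁺` have a greatest
lower bound in `T⁺`. -/
def IsMeetSL {T : Type*} (P : PreConst T) : Prop :=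
  ∀ e f, P.isPlus e → P.isPlus f → ∃ g, P.isPlus g ∧ P.le g e ∧ P.le g f ∧
    ∀ k, P.isPlus k → P.le k e → P.le k f → P.le k g


section Aux
variable {S : Type*} (A : PreSgpd S)

lemma idem (h : IsLRS A) (s : S) :
    A.D (A.plus s) (A.plus s) ∧ A.mul (A.plus s) (A.plus s) = A.plus s := by
  obtain ⟨hD, hE⟩ := h.lr1 s
  obtain ⟨hD2, hE2⟩ := h.lr3 s s hD
  exact ⟨hD2, by rw [← hE2, hE]⟩

lemma pp (h : IsLRS A) (s : S) : A.plus (A.plus s) = A.plus s := by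
  obtain ⟨hD2, hE2⟩ := idem A h s
  obtain ⟨hD3, hE3⟩ := h.lr3 s (A.plus s) hD2
  have hcomm := (h.lr2 s (A.plus s)).2 hD3
  obtain ⟨hD4, hE4⟩ := h.lr1 (A.plus s)
  rw [hE2] at hE3
  rw [hE3, hcomm, hE4]

/-- If all corestrictions by elements of S⁺ exist, all products exist. -/
lemma total_of_plus (h : IsLRS A)
    (H : ∀ x e, (∃ u, e = A.plus u) → A.D x e) (s t : S) : A.D s t := by
  have h1 : A.D s (A.plus t) := H s _ ⟨t, rfl⟩
  obtain ⟨hD, hE⟩ := h.lr1 t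
  have := (h.assoc1 s (A.plus t) t h1 hD).2.1
  rwa [hE] at this

/-- Key: ND + meet-semilattice imply all corestrictions exist. -/
lemma key (h : IsLRS A) (hnd : IsND (CofS A)) (hm : IsMeetSL (CofS A))
    (x f : S) (hf : ∃ v, f = A.plus v) : A.D x f := by
  obtain ⟨e, ⟨u, he⟩, hDxe⟩ := hnd x
  obtain ⟨g, ⟨w, hg⟩, hge, hgf, _⟩ := hm e f ⟨u, he⟩ hf
  obtain ⟨v, hfv⟩ := hf
  simp only [CofS] at he hg hDxe hge hgf
  have hpg : A.plus g = g := by rw [hg]; exact pp A h w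
  obtain ⟨hDge, hEge⟩ := hge
  obtain ⟨hDgf, hEgf⟩ := hgf
  rw [hpg] at hDge hEge hDgf hEgf
  have hDge' : A.D (A.plus w) (A.plus u) := by rwa [hg, he] at hDge
  have hDeg : A.D e g := by
    have := (h.lr2 w u).1.mp hDge'
    rwa [← hg, ← he] at this
  have hEeg : A.mul e g = g := by
    have := (h.lr2 w u).2 hDge'
    rw [← hg, ← he] at this
    rw [← this, hEge]
  have hDxg : A.D x g := by
    have := (h.assoc1 x e g hDxe hDeg).2.1
    rwa [hEeg] at this
  have hDgf' : A.D (A.plus w) (A.plus v) := by rwa [hg, hfv] at hDgf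
  have hDfg : A.D f g := by
    have := (h.lr2 w v).1.mp hDgf'
    rwa [← hg, ← hfv] at this
  have hEfg : A.mul f g = g := by
    have := (h.lr2 w v).2 hDgf'
    rw [← hg, ← hfv] at this
    rw [← this, hEgf]
  have hx : A.D x (A.mul f g) := by rwa [hEfg]
  exact (h.assoc3 x f g hDfg hx).1
end Aux

/-- A left restriction semigroupoid is a left restriction semigroup (all pairs
composable) iff `C(S)` is non-degenerate and `(C(S)⁺,≤)` is a meet-semilattice,
iff every corestriction `x|e` (for `e ∈ C(S)⁺`) exists in `C(S)`. -/
theorem stmt19 {S : Type*} (A : PreSgpd S) (h : IsLRS A) :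
    ((∀ s t, A.D s t) ↔ (IsND (CofS A) ∧ IsMeetSL (CofS A))) ∧
    ((∀ s t, A.D s t) ↔
      (∀ x e, (CofS A).isPlus e → (CofS A).coE x e)) := by
  have fwd : (∀ s t, A.D s t) → IsND (CofS A) ∧ IsMeetSL (CofS A) := by
    intro hT
    constructor
    · intro x
      exact ⟨A.plus x, ⟨x, rfl⟩, hT x (A.plus x)⟩
    · rintro e f ⟨u, he⟩ ⟨v, hf⟩
      simp only [CofS, PreConst.isPlus] at he hf ⊢
      have hpg : A.plus (A.mul e f) = A.mul e f := by
        have := (h.lr3 u (A.plus v) (hT _ _)).2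
        rw [pp A h v, ← he, ← hf] at this
        exact this
      refine ⟨A.mul e f, ⟨A.mul e f, hpg.symm⟩, ⟨by rw [hpg]; exact hT _ _, ?_⟩,
        ⟨by rw [hpg]; exact hT _ _, ?_⟩, ?_⟩
      · rw [hpg]
        have a1 := (h.assoc1 e f e (hT _ _) (hT _ _)).2.2
        have hcomm : A.mul f e = A.mul e f := by
          have := (h.lr2 v u).2 (by rw [← hf, ← he]; exact hT _ _)
          rwa [← hf, ← he] at this
        have a2 := (h.assoc1 e e f (hT _ _) (hT _ _)).2.2
        have hee : A.mul e e = e := by rw [he]; exact (idem A h u).2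
        rw [a1, hcomm, ← a2, hee]
      · rw [hpg]
        have a1 := (h.assoc1 e f f (hT _ _) (hT _ _)).2.2
        have hff : A.mul f f = f := by rw [hf]; exact (idem A h v).2
        rw [a1, hff]
      · rintro k ⟨w, hk⟩ hke hkf
        have hpk : A.plus k = k := by rw [hk]; exact pp A h w
        obtain ⟨_, hEke⟩ := hke
        obtain ⟨_, hEkf⟩ := hkf
        rw [hpk] at hEke hEkf
        refine ⟨by rw [hpk]; exact hT _ _, ?_⟩
        rw [hpk]
        have a1 := (h.assoc1 k e f (hT _ _) (hT _ _)).2.2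
        rw [← a1, hEke, hEkf]
  have key2 : (IsND (CofS A) ∧ IsMeetSL (CofS A)) → ∀ s t, A.D s t := by
    rintro ⟨hnd, hm⟩
    exact total_of_plus A h (fun x e he => key A h hnd hm x e he)
  refine ⟨⟨fwd, key2⟩, ⟨?_, ?_⟩⟩
  · intro hT x e _
    exact hT x e
  · intro H
    exact total_of_plus A h (fun x e he => H x e he)
end
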